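/- Let g(y) := (−y³ + 2y² + y − 1)/(2y² + 4y − 3). For every real m with 1/3 ≤ m ≤ 1/2, one has m ≥ g(g(m)). (This is the final step in Case 2 of the proof of Theorem 2(3), establishing m₁ ≥ g(m₂) from m₂ ≥ g(m₁) and the monotonicity of g.) -/

import Mathlib

/-- `g(y) := (−y³ + 2y² + y − 1)/(2y² + 4y − 3)`. -/
noncomputable def g (y : ℝ) : ℝ := (-y^3 + 2*y^2 + y - 1) / (2*y^2 + 4*y - 3)

/-- For `1/3 ≤ m ≤ 1/2`, `m ≥ g(g(m))`. -/
theorem ge_g_g (m : ℝ) (h0 : 1/3 ≤ m) (h1 : m ≤ 1/2) :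
    g (g m) ≤ m := by
  have hD1 : 2*m^2 + 4*m - 3 < 0 := by nlinarith
  have hD1' : 2*m^2 + 4*m - 3 ≠ 0 := ne_of_lt hD1
  have ht1 : g m ≤ 1/2 := by
    rw [g, div_le_iff_of_neg hD1]; nlinarith
  have ht0 : 0 ≤ g m := by
    rw [g, le_div_iff_of_neg hD1]; nlinarith
  have hD2 : 2*(g m)^2 + 4*(g m) - 3 < 0 := by nlinarith
  -- the cube of the (negative) inner denominator is negative
  have hD3 : (0:ℝ) < -(2*m^2 + 4*m - 3)^3 := by
    have h := pow_pos (show (0:ℝ) < -(2*m^2 + 4*m - 3) by linarith) 3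
    nlinarith [h]
  -- u := 1/2 - m, 0 ≤ u ≤ 1/6
  have hu0 : (0:ℝ) ≤ 1/2 - m := by linarith
  have hu3 : (0:ℝ) ≤ (1/2 - m)^3 := pow_nonneg hu0 3
  have hu5 : (0:ℝ) ≤ (1/2 - m)^5 := pow_nonneg hu0 5
  have hQ : (0:ℝ) ≤ 13 - 58*m + 81*m^2 - 36*m^3 + 4*m^4 + 19*m^5 - 30*m^6
      - 7*m^7 + m^8 := by
    nlinarith [mul_nonneg hu3 (by linarith : (0:ℝ) ≤ 1105/16 - 349/4*(1/2 - m)),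
      mul_nonneg hu5 (by linarith : (0:ℝ) ≤ 403/4 - 95/2*(1/2 - m)),
      pow_nonneg hu0 2, pow_nonneg hu0 7, pow_nonneg hu0 8]
  have hP : (0:ℝ) ≤ -13 + 97*m - 255*m^2 + 279*m^3 - 112*m^4 - 7*m^5 + 87*m^6
      - 83*m^7 - 22*m^8 + 3*m^9 := by
    nlinarith [mul_nonneg (by linarith : (0:ℝ) ≤ 3*m - 1) hQ]
  have key : (-(g m)^3 + 2*(g m)^2 + g m - 1) - m*(2*(g m)^2 + 4*(g m) - 3)
      = (-13 + 97*m - 255*m^2 + 279*m^3 - 112*m^4 - 7*m^5 + 87*m^6 - 83*m^7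
        - 22*m^8 + 3*m^9) / (-(2*m^2 + 4*m - 3)^3) := by
    rw [g]
    have hD'' : m * (m * 2 + 4) - 3 ≠ 0 := by convert hD1' using 1; ring
    field_simp
    ring
  have hfrac : (0:ℝ) ≤ (-13 + 97*m - 255*m^2 + 279*m^3 - 112*m^4 - 7*m^5
      + 87*m^6 - 83*m^7 - 22*m^8 + 3*m^9) / (-(2*m^2 + 4*m - 3)^3) :=
    div_nonneg hP (le_of_lt hD3)
  have hmain : m*(2*(g m)^2 + 4*(g m) - 3) ≤ -(g m)^3 + 2*(g m)^2 + g m - 1 := by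
    linarith [key ▸ hfrac]
  calc g (g m) = (-(g m)^3 + 2*(g m)^2 + g m - 1) / (2*(g m)^2 + 4*(g m) - 3) := by
        rw [g]
    _ ≤ m := by rw [div_le_iff_of_neg hD2]; linarith
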